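/- arXiv:1404.3525 — 5 statements merged into one kernel-verified Lean document; each statement's English description precedes it below -/
import Mathlib

section
/- Consider a K-user MISO interference channel with channel vectors h_{kl} ∈ ℂ^N for 1 ≤ k,l ≤ K. For a tuple Q = (Q_1,…,Q_K) of N×N complex Hermitian positive semidefinite matrices with tr(Q_k) ≤ 1 for all k (an admissible tuple), define the power gains x_{l,k}(Q_l) = h_{lk}^H Q_l h_{lk} and the receive power gain vectors x^k(Q) = (x_{1,k}(Q_1), …, x_{K,k}(Q_K)) ∈ ℝ_+^K. Let u_1,…,u_K : ℝ_+^K → ℝ_+ be user utility functions such that u_k is strictly increasing in its k-th argument and strictly decreasing in each other argument, and let 𝒰 = {(u_1(x^1(Q)),…,u_K(x^K(Q))) : Q admissible} be the utility region. Then every Pareto optimal point of 𝒰 is achieved by an admissible tuple (Q_1,…,Q_K) in which every Q_k has rank at most one, i.e., Q_k = w_k w_k^H for some w_k ∈ ℂ^N with ‖w_k‖ ≤ 1. -/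
open Matrix
open scoped ComplexOrder

/-- The power gain `hᴴ Q h` (a real number for Hermitian `Q`). -/
noncomputable def powerGain {N : ℕ} (Q : Matrix (Fin N) (Fin N) ℂ) (h : Fin N → ℂ) : ℝ :=
  (star h ⬝ᵥ Q.mulVec h).re

/-- An admissible tuple of transmit correlation matrices: each `Q k` is
Hermitian positive semidefinite with trace at most one. -/
def Admissible {N K : ℕ} (Q : Fin K → Matrix (Fin N) (Fin N) ℂ) : Prop :=
  ∀ k, (Q k).PosSemidef ∧ (Q k).trace.re ≤ 1

/-!
For a positive semidefinite `Q` with `tr Q ≤ 1` and a direction `a`, the vector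
`w = Q a / √(aᴴ Q a)` satisfies `|aᴴ w|² = aᴴ Q a`, while the Cauchy–Schwarz inequality for the
semi-inner product `⟪x, y⟫ = xᴴ Q y` gives `|bᴴ w|² ≤ bᴴ Q b` for every `b` and, applied to the
unit vectors, `‖w‖² ≤ tr Q`. Replacing each `Q_l` by `w_l w_lᴴ` with `a = h_ll` thus keeps every
user's own gain and does not increase any interference gain, so no utility decreases; at a Pareto
optimal point none can increase either.
-/

namespace Matrix.PosSemidef

variable {n 𝕜 : Type*} [Fintype n] [RCLike 𝕜] {M : Matrix n n 𝕜}

theorem norm_dotProduct_mulVec_sq_le (hM : M.PosSemidef) (x y : n → 𝕜) :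
    ‖star x ⬝ᵥ M *ᵥ y‖ ^ 2 ≤
      RCLike.re (star x ⬝ᵥ M *ᵥ x) * RCLike.re (star y ⬝ᵥ M *ᵥ y) := by
  let := M.toSeminormedAddCommGroup hM
  let := M.toInnerProductSpace hM
  have hinner (a b : n → 𝕜) : inner 𝕜 a b = star a ⬝ᵥ M *ᵥ b := dotProduct_comm _ _
  have hsymm : ‖star y ⬝ᵥ M *ᵥ x‖ = ‖star x ⬝ᵥ M *ᵥ y‖ := by
    rw [← hinner, ← hinner, ← inner_conj_symm, RCLike.norm_conj]
  have := inner_mul_inner_self_le (𝕜 := 𝕜) x y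
  rwa [hinner, hinner, hinner, hinner, hsymm, ← sq] at this

theorem norm_dotProduct_mulVec_self (hM : M.PosSemidef) (x : n → 𝕜) :
    ‖star x ⬝ᵥ M *ᵥ x‖ = RCLike.re (star x ⬝ᵥ M *ᵥ x) := by
  simpa using congrArg RCLike.re (RCLike.norm_of_nonneg' (hM.dotProduct_mulVec_nonneg x))

theorem sum_norm_mulVec_sq_le (hM : M.PosSemidef) (x : n → 𝕜) :
    ∑ i, ‖(M *ᵥ x) i‖ ^ 2 ≤ RCLike.re M.trace * RCLike.re (star x ⬝ᵥ M *ᵥ x) := by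
  classical
  have hentry (i : n) (y : n → 𝕜) : star (Pi.single i 1) ⬝ᵥ M *ᵥ y = (M *ᵥ y) i := by
    rw [Pi.star_single, star_one, single_dotProduct, one_mul]
  have hdiag (i : n) : star (Pi.single i 1) ⬝ᵥ M *ᵥ Pi.single i 1 = M i i := by
    rw [hentry, mulVec_single_one, col_apply]
  calc ∑ i, ‖(M *ᵥ x) i‖ ^ 2
      ≤ ∑ i, RCLike.re (M i i) * RCLike.re (star x ⬝ᵥ M *ᵥ x) := by
        gcongr with i
        have := hM.norm_dotProduct_mulVec_sq_le (Pi.single i 1) x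
        rwa [hdiag, hentry] at this
    _ = RCLike.re M.trace * RCLike.re (star x ⬝ᵥ M *ᵥ x) := by
        rw [← Finset.sum_mul, trace, map_sum]; rfl

theorem exists_rankOne_minorant (hM : M.PosSemidef) (htr : RCLike.re M.trace ≤ 1) (a : n → 𝕜) :
    ∃ w : n → 𝕜, ∑ i, ‖w i‖ ^ 2 ≤ 1 ∧
      ‖star a ⬝ᵥ w‖ ^ 2 = RCLike.re (star a ⬝ᵥ M *ᵥ a) ∧
      ∀ b, ‖star b ⬝ᵥ w‖ ^ 2 ≤ RCLike.re (star b ⬝ᵥ M *ᵥ b) := by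
  set g := RCLike.re (star a ⬝ᵥ M *ᵥ a)
  have hg_nonneg : 0 ≤ g := hM.re_dotProduct_nonneg a
  rcases hg_nonneg.eq_or_lt with hg | hg
  · exact ⟨0, by simp, by simp [← hg], fun b => by simpa using hM.re_dotProduct_nonneg b⟩
  set c : 𝕜 := (((√g)⁻¹ : ℝ) : 𝕜)
  have hc : ‖c‖ ^ 2 = g⁻¹ := by
    rw [RCLike.norm_of_nonneg (by positivity), inv_pow, Real.sq_sqrt hg.le]
  have hdot (b : n → 𝕜) : ‖star b ⬝ᵥ c • M *ᵥ a‖ ^ 2 = g⁻¹ * ‖star b ⬝ᵥ M *ᵥ a‖ ^ 2 := by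
    rw [dotProduct_smul, smul_eq_mul, norm_mul, mul_pow, hc]
  refine ⟨c • M *ᵥ a, ?_, ?_, fun b => ?_⟩
  · calc ∑ i, ‖(c • M *ᵥ a) i‖ ^ 2 = g⁻¹ * ∑ i, ‖(M *ᵥ a) i‖ ^ 2 := by
          simp only [Pi.smul_apply, smul_eq_mul, norm_mul, mul_pow, hc, Finset.mul_sum]
      _ ≤ g⁻¹ * (RCLike.re M.trace * g) := by gcongr; exact hM.sum_norm_mulVec_sq_le a
      _ ≤ 1 := by rwa [mul_comm, mul_assoc, mul_inv_cancel₀ hg.ne', mul_one]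
  · rw [hdot, hM.norm_dotProduct_mulVec_self, sq, inv_mul_cancel_left₀ hg.ne']
  · calc ‖star b ⬝ᵥ c • M *ᵥ a‖ ^ 2 ≤ g⁻¹ * (RCLike.re (star b ⬝ᵥ M *ᵥ b) * g) := by
          rw [hdot]; gcongr; exact hM.norm_dotProduct_mulVec_sq_le b a
      _ = RCLike.re (star b ⬝ᵥ M *ᵥ b) := by field_simp

end Matrix.PosSemidef

theorem le_of_forall_update_le {ι α β : Type*} [Fintype ι] [DecidableEq ι] [Preorder β]
    {f : (ι → α) → β} {D : Set α} {r : ι → α → α → Prop}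
    (hf : ∀ x, (∀ j, x j ∈ D) → ∀ j t t', t ∈ D → t' ∈ D → r j t t' →
      f (Function.update x j t) ≤ f (Function.update x j t'))
    {x x' : ι → α} (hx : ∀ j, x j ∈ D) (hx' : ∀ j, x' j ∈ D) (hr : ∀ j, r j (x j) (x' j)) :
    f x ≤ f x' := by
  suffices ∀ s : Finset ι, f x ≤ f (s.piecewise x' x) by simpa using this Finset.univ
  intro s
  induction s using Finset.induction_on with
  | empty => simp
  | insert j s hj ih =>
    have hmem (i : ι) : s.piecewise x' x i ∈ D := by
      by_cases hi : i ∈ s <;> simp [hi, hx, hx']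
    calc f x ≤ f (s.piecewise x' x) := ih
      _ = f (Function.update (s.piecewise x' x) j (x j)) := by
        rw [← Finset.piecewise_eq_of_notMem s x' x hj, Function.update_eq_self]
      _ ≤ f (Function.update (s.piecewise x' x) j (x' j)) :=
        hf _ hmem j _ _ (hx j) (hx' j) (hr j)
      _ = f ((insert j s).piecewise x' x) := by rw [Finset.piecewise_insert]

theorem utility_le_of_gain_le {ι : Type*} [Fintype ι] [DecidableEq ι] {u : (ι → ℝ) → ℝ} {k : ι}
    (hinc : ∀ x : ι → ℝ, (∀ j, 0 ≤ x j) → ∀ t t' : ℝ, 0 ≤ t → t < t' →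
      u (Function.update x k t) < u (Function.update x k t'))
    (hdec : ∀ l, l ≠ k → ∀ x : ι → ℝ, (∀ j, 0 ≤ x j) → ∀ t t' : ℝ, 0 ≤ t → t < t' →
      u (Function.update x l t') < u (Function.update x l t))
    {x x' : ι → ℝ} (hx : ∀ j, 0 ≤ x j) (hx' : ∀ j, 0 ≤ x' j)
    (hk : x k ≤ x' k) (hl : ∀ l, l ≠ k → x' l ≤ x l) : u x ≤ u x' := by
  refine le_of_forall_update_le (D := Set.Ici 0)
    (r := fun j t t' => if j = k then t ≤ t' else t' ≤ t) ?_ hx hx' fun j => ?_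
  · intro y hy j t t' ht ht' hr
    by_cases hj : j = k
    · subst hj
      rw [if_pos rfl] at hr
      obtain hlt | rfl := hr.lt_or_eq
      exacts [(hinc y hy t t' ht hlt).le, le_rfl]
    · rw [if_neg hj] at hr
      obtain hlt | rfl := hr.lt_or_eq
      exacts [(hdec j hj y hy t' t ht' hlt).le, le_rfl]
  · by_cases hj : j = k
    · subst hj; simpa using hk
    · simpa [hj] using hl j hj

theorem powerGain_vecMulVec {N : ℕ} (w h : Fin N → ℂ) :
    powerGain (vecMulVec w (star w)) h = Complex.normSq (star h ⬝ᵥ w) := by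
  rw [powerGain, vecMulVec_mulVec, op_smul_eq_smul, dotProduct_smul, smul_eq_mul,
    star_dotProduct, mul_comm]
  exact congrArg Complex.re (Complex.mul_conj _) |>.trans (Complex.ofReal_re _)

theorem admissible_vecMulVec {N K : ℕ} {w : Fin K → Fin N → ℂ}
    (hw : ∀ k, ∑ i, Complex.normSq (w k i) ≤ 1) :
    Admissible fun k => vecMulVec (w k) (star (w k)) := by
  refine fun k => ⟨posSemidef_vecMulVec_self_star _, ?_⟩
  simpa [trace_vecMulVec, dotProduct, Complex.mul_conj] using hw k

theorem pareto_achieved_by_rank_one_general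
    (N K : ℕ)
    (h : Fin K → Fin K → (Fin N → ℂ))  -- `h l k` : channel from transmitter `l` to receiver `k`
    (u : Fin K → (Fin K → ℝ) → ℝ)
    (hu_inc : ∀ k (x : Fin K → ℝ), (∀ j, 0 ≤ x j) →
      ∀ t t' : ℝ, 0 ≤ t → t < t' →
        u k (Function.update x k t) < u k (Function.update x k t'))
    (hu_dec : ∀ k l, l ≠ k → ∀ (x : Fin K → ℝ), (∀ j, 0 ≤ x j) →
      ∀ t t' : ℝ, 0 ≤ t → t < t' →
        u k (Function.update x l t') < u k (Function.update x l t))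
    (𝒰 : Set (Fin K → ℝ))
    (h𝒰 : 𝒰 = {pt | ∃ Q : Fin K → Matrix (Fin N) (Fin N) ℂ, Admissible Q ∧
        pt = fun k => u k (fun l => powerGain (Q l) (h l k))})
    (pt : Fin K → ℝ) (hpt : pt ∈ 𝒰)
    (hPareto : ¬ ∃ pt' ∈ 𝒰, (∀ k, pt k ≤ pt' k) ∧ (∃ k, pt k < pt' k)) :
    ∃ w : Fin K → (Fin N → ℂ),
      (∀ k, ∑ i, Complex.normSq (w k i) ≤ 1) ∧
      pt = fun k => u k (fun l => Complex.normSq (star (h l k) ⬝ᵥ w l)) := by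
  rw [h𝒰] at hpt
  obtain ⟨Q, hQ, rfl⟩ := hpt
  choose w hw_norm hw_own hw_cross using
    fun l => (hQ l).1.exists_rankOne_minorant (hQ l).2 (h l l)
  simp only [← Complex.normSq_eq_norm_sq, RCLike.re_to_complex] at hw_norm hw_own hw_cross
  set pt' : Fin K → ℝ := fun k => u k fun l => Complex.normSq (star (h l k) ⬝ᵥ w l)
  have hmem : pt' ∈ 𝒰 := by
    rw [h𝒰]
    exact ⟨_, admissible_vecMulVec hw_norm, by simp only [pt', powerGain_vecMulVec]⟩
  have hle : (fun k => u k fun l => powerGain (Q l) (h l k)) ≤ pt' := fun k =>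
    utility_le_of_gain_le (hu_inc k) (hu_dec k) (fun l => (hQ l).1.re_dotProduct_nonneg _)
      (fun l => Complex.normSq_nonneg _) (hw_own k).ge (fun l _ => hw_cross l _)
  exact ⟨w, hw_norm,
    hle.eq_or_lt.resolve_right fun hlt => hPareto ⟨pt', hmem, Pi.lt_def.1 hlt⟩⟩

/-- Every Pareto optimal point of the utility region of a `K`-user MISO interference
channel is achieved by an admissible tuple of rank-one correlation matrices
`Q_k = w_k w_kᴴ` with `‖w_k‖ ≤ 1` (single-stream beamforming). -/
theorem pareto_achieved_by_rank_one
    (N K : ℕ)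
    (h : Fin K → Fin K → (Fin N → ℂ))  -- `h l k` : channel from transmitter `l` to receiver `k`
    (u : Fin K → (Fin K → ℝ) → ℝ)
    (hu_nonneg : ∀ k (x : Fin K → ℝ), (∀ j, 0 ≤ x j) → 0 ≤ u k x)
    (hu_inc : ∀ k (x : Fin K → ℝ), (∀ j, 0 ≤ x j) →
      ∀ t t' : ℝ, 0 ≤ t → t < t' →
        u k (Function.update x k t) < u k (Function.update x k t'))
    (hu_dec : ∀ k l, l ≠ k → ∀ (x : Fin K → ℝ), (∀ j, 0 ≤ x j) →
      ∀ t t' : ℝ, 0 ≤ t → t < t' →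
        u k (Function.update x l t') < u k (Function.update x l t))
    (𝒰 : Set (Fin K → ℝ))
    (h𝒰 : 𝒰 = {pt | ∃ Q : Fin K → Matrix (Fin N) (Fin N) ℂ, Admissible Q ∧
        pt = fun k => u k (fun l => powerGain (Q l) (h l k))})
    (pt : Fin K → ℝ) (hpt : pt ∈ 𝒰)
    (hPareto : ¬ ∃ pt' ∈ 𝒰, (∀ k, pt k ≤ pt' k) ∧ (∃ k, pt k < pt' k)) :
    ∃ w : Fin K → (Fin N → ℂ),
      (∀ k, ∑ i, Complex.normSq (w k i) ≤ 1) ∧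
      pt = fun k => u k (fun l => Complex.normSq (star (h l k) ⬝ᵥ w l)) :=
  pareto_achieved_by_rank_one_general N K h u hu_inc hu_dec 𝒰 h𝒰 pt hpt hPareto
end

section
/- Consider a K-user MISO interference channel with channel vectors h_{kl} ∈ ℂ^N for 1 ≤ k,l ≤ K, power gains x_{l,k}(Q_l) = h_{lk}^H Q_l h_{lk} for admissible tuples Q = (Q_1,…,Q_K) of Hermitian positive semidefinite matrices with tr(Q_k) ≤ 1, and user utilities u_1,…,u_K : ℝ_+^K → ℝ_+ where u_k is strictly increasing in its k-th argument and strictly decreasing in each other argument. Suppose an admissible tuple (Q_1,…,Q_K) achieves a Pareto optimal point of the utility region 𝒰 = {(u_1(x^1(Q)),…,u_K(x^K(Q))) : Q admissible}. Then for every k the transmit power gain vector x_k(Q_k) = (x_{k,1}(Q_k),…,x_{k,K}(Q_k)) lies on the outer boundary part of Ω_k in the direction e_k = (−1,…,−1,+1,−1,…,−1) (with +1 in position k); that is, there is no x' ∈ Ω_k with x'_k ≥ x_{k,k}(Q_k), x'_l ≤ x_{k,l}(Q_k) for every l ≠ k, and at least one of these inequalities strict. -/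
open Matrix
open scoped ComplexOrder

/-- The power gain region of a transmitter with channels `hk l` to receiver `l`. -/
def PGRegion {N K : ℕ} (hk : Fin K → (Fin N → ℂ)) : Set (Fin K → ℝ) :=
  {x | ∃ Q : Matrix (Fin N) (Fin N) ℂ, Q.PosSemidef ∧ Q.trace.re ≤ 1 ∧
    x = fun l => powerGain Q (hk l)}

/-! Replacing `Q_k` by a covariance whose gain vector dominates `x_k(Q_k)` in the direction `e_k`
changes only the `k`-th argument of every utility: it raises user `k`'s own gain and lowers the
interference seen by every other user. By the monotonicity of the utilities no user loses and at least one user gains,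
contradicting Pareto optimality. -/

open Function Set

/-- The receive power gain vector `x^k(Q)`. -/
noncomputable def receiveGain {N K : ℕ} (h : Fin K → Fin K → (Fin N → ℂ))
    (Q : Fin K → Matrix (Fin N) (Fin N) ℂ) (k : Fin K) : Fin K → ℝ :=
  fun l => powerGain (Q l) (h l k)

lemma powerGain_nonneg {N : ℕ} {Q : Matrix (Fin N) (Fin N) ℂ} (hQ : Q.PosSemidef)
    (h : Fin N → ℂ) : 0 ≤ powerGain Q h :=
  (Complex.nonneg_iff.mp (hQ.dotProduct_mulVec_nonneg h)).1

lemma receiveGain_nonneg {N K : ℕ} (h : Fin K → Fin K → (Fin N → ℂ))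
    {Q : Fin K → Matrix (Fin N) (Fin N) ℂ} (hQ : Admissible Q) (k l : Fin K) :
    0 ≤ receiveGain h Q k l :=
  powerGain_nonneg (hQ l).1 _

lemma receiveGain_update {N K : ℕ} (h : Fin K → Fin K → (Fin N → ℂ))
    (Q : Fin K → Matrix (Fin N) (Fin N) ℂ) (k : Fin K) (P : Matrix (Fin N) (Fin N) ℂ)
    (j : Fin K) :
    receiveGain h (update Q k P) j = update (receiveGain h Q j) k (powerGain P (h k j)) :=
  funext fun l => apply_update (fun l M => powerGain M (h l j)) Q k P l

lemma Admissible.update {N K : ℕ} {Q : Fin K → Matrix (Fin N) (Fin N) ℂ} (hQ : Admissible Q)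
    (k : Fin K) {P : Matrix (Fin N) (Fin N) ℂ} (hP : P.PosSemidef) (htr : P.trace.re ≤ 1) :
    Admissible (update Q k P) :=
  (forall_update_iff Q fun _ M => M.PosSemidef ∧ M.trace.re ≤ 1).2 ⟨⟨hP, htr⟩, fun l _ => hQ l⟩

section UpdateCoordinate

variable {ι : Type*} [DecidableEq ι] {f : (ι → ℝ) → ℝ} {x : ι → ℝ} {i : ι} {t : ℝ}

lemma le_apply_update_of_monotoneOn (hf : MonotoneOn (fun s => f (update x i s)) (Ici 0))
    (hx : 0 ≤ x i) (ht : x i ≤ t) : f x ≤ f (update x i t) := by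
  simpa using hf hx (hx.trans ht) ht

lemma lt_apply_update_of_strictMonoOn (hf : StrictMonoOn (fun s => f (update x i s)) (Ici 0))
    (hx : 0 ≤ x i) (ht : x i < t) : f x < f (update x i t) := by
  simpa using hf hx (hx.trans ht.le) ht

lemma le_apply_update_of_antitoneOn (hf : AntitoneOn (fun s => f (update x i s)) (Ici 0))
    (ht₀ : 0 ≤ t) (ht : t ≤ x i) : f x ≤ f (update x i t) := by
  simpa using hf ht₀ (ht₀.trans ht) ht

lemma lt_apply_update_of_strictAntiOn (hf : StrictAntiOn (fun s => f (update x i s)) (Ici 0))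
    (ht₀ : 0 ≤ t) (ht : t < x i) : f x < f (update x i t) := by
  simpa using hf ht₀ (ht₀.trans ht.le) ht

end UpdateCoordinate

theorem pareto_implies_outer_boundary_general
    (N K : ℕ)
    (h : Fin K → Fin K → (Fin N → ℂ))  -- `h l k` : channel from transmitter `l` to receiver `k`
    (u : Fin K → (Fin K → ℝ) → ℝ)
    (hu_inc : ∀ k (x : Fin K → ℝ), (∀ j, 0 ≤ x j) →
      ∀ t t' : ℝ, 0 ≤ t → t < t' →
        u k (Function.update x k t) < u k (Function.update x k t'))
    (hu_dec : ∀ k l, l ≠ k → ∀ (x : Fin K → ℝ), (∀ j, 0 ≤ x j) →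
      ∀ t t' : ℝ, 0 ≤ t → t < t' →
        u k (Function.update x l t') < u k (Function.update x l t))
    (𝒰 : Set (Fin K → ℝ))
    (h𝒰 : 𝒰 = {pt | ∃ Q : Fin K → Matrix (Fin N) (Fin N) ℂ, Admissible Q ∧
        pt = fun k => u k (fun l => powerGain (Q l) (h l k))})
    (Q : Fin K → Matrix (Fin N) (Fin N) ℂ) (hQ : Admissible Q)
    (hPareto : ¬ ∃ pt' ∈ 𝒰,
        (∀ k, u k (fun l => powerGain (Q l) (h l k)) ≤ pt' k) ∧
        (∃ k, u k (fun l => powerGain (Q l) (h l k)) < pt' k)) :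
    ∀ k, ¬ ∃ x' ∈ PGRegion (h k),
        (powerGain (Q k) (h k k) ≤ x' k) ∧
        (∀ l, l ≠ k → x' l ≤ powerGain (Q k) (h k l)) ∧
        ((powerGain (Q k) (h k k) < x' k) ∨ ∃ l, l ≠ k ∧ x' l < powerGain (Q k) (h k l)) := by
  rintro k ⟨_, ⟨P, hP, htr, rfl⟩, hkk, hkl, hstrict⟩
  have hx := receiveGain_nonneg h hQ
  have hinc (j : Fin K) : StrictMonoOn (fun t => u j (update (receiveGain h Q j) j t)) (Ici 0) :=
    fun _ ha _ _ hab => hu_inc j _ (hx j) _ _ ha hab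
  have hdec (j : Fin K) (hj : j ≠ k) :
      StrictAntiOn (fun t => u j (update (receiveGain h Q j) k t)) (Ici 0) :=
    fun _ ha _ _ hab => hu_dec j k hj.symm _ (hx j) _ _ ha hab
  have hP₀ := powerGain_nonneg hP
  refine hPareto ⟨fun j => u j (update (receiveGain h Q j) k (powerGain P (h k j))),
    h𝒰 ▸ ⟨_, hQ.update k hP htr, funext fun j => by rw [← receiveGain_update]; rfl⟩,
    fun j => ?_, ?_⟩
  · rcases eq_or_ne j k with rfl | hj
    · exact le_apply_update_of_monotoneOn (hinc j).monotoneOn (hx j j) hkk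
    · exact le_apply_update_of_antitoneOn (hdec j hj).antitoneOn (hP₀ _) (hkl j hj)
  · rcases hstrict with hlt | ⟨j, hj, hlt⟩
    · exact ⟨k, lt_apply_update_of_strictMonoOn (hinc k) (hx k k) hlt⟩
    · exact ⟨j, lt_apply_update_of_strictAntiOn (hdec j hj) (hP₀ _) hlt⟩

/-- If an admissible tuple `(Q_1,…,Q_K)` achieves a Pareto optimal point of the
utility region, then for every `k` the transmit power gain vector `x_k(Q_k)` lies
on the outer boundary part of `Ω_k` in the direction `e_k`: there is no
`x' ∈ Ω_k` with `x'_k ≥ x_{k,k}`, `x'_l ≤ x_{k,l}` for all `l ≠ k`, and at least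
one inequality strict. -/
theorem pareto_implies_outer_boundary
    (N K : ℕ)
    (h : Fin K → Fin K → (Fin N → ℂ))  -- `h l k` : channel from transmitter `l` to receiver `k`
    (u : Fin K → (Fin K → ℝ) → ℝ)
    (hu_nonneg : ∀ k (x : Fin K → ℝ), (∀ j, 0 ≤ x j) → 0 ≤ u k x)
    (hu_inc : ∀ k (x : Fin K → ℝ), (∀ j, 0 ≤ x j) →
      ∀ t t' : ℝ, 0 ≤ t → t < t' →
        u k (Function.update x k t) < u k (Function.update x k t'))
    (hu_dec : ∀ k l, l ≠ k → ∀ (x : Fin K → ℝ), (∀ j, 0 ≤ x j) →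
      ∀ t t' : ℝ, 0 ≤ t → t < t' →
        u k (Function.update x l t') < u k (Function.update x l t))
    (𝒰 : Set (Fin K → ℝ))
    (h𝒰 : 𝒰 = {pt | ∃ Q : Fin K → Matrix (Fin N) (Fin N) ℂ, Admissible Q ∧
        pt = fun k => u k (fun l => powerGain (Q l) (h l k))})
    (Q : Fin K → Matrix (Fin N) (Fin N) ℂ) (hQ : Admissible Q)
    (hPareto : ¬ ∃ pt' ∈ 𝒰,
        (∀ k, u k (fun l => powerGain (Q l) (h l k)) ≤ pt' k) ∧
        (∃ k, u k (fun l => powerGain (Q l) (h l k)) < pt' k)) :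
    ∀ k, ¬ ∃ x' ∈ PGRegion (h k),
        (powerGain (Q k) (h k k) ≤ x' k) ∧
        (∀ l, l ≠ k → x' l ≤ powerGain (Q k) (h k l)) ∧
        ((powerGain (Q k) (h k k) < x' k) ∨ ∃ l, l ≠ k ∧ x' l < powerGain (Q k) (h k l)) :=
  pareto_implies_outer_boundary_general N K h u hu_inc hu_dec 𝒰 h𝒰 Q hQ hPareto
end

section
/- Consider channel vectors h_{kl} ∈ ℂ^N for 1 ≤ k,l ≤ K and power gain regions Ω_k = {(h_{k1}^H Q h_{k1}, …, h_{kK}^H Q h_{kK}) : Q Hermitian positive semidefinite, tr(Q) ≤ 1}. Let U : ℝ_+^{K×K} → ℝ be differentiable at X* = [x_1*,…,x_K*] with x_k* ∈ Ω_k for all k, and assume the sign conditions ∂U/∂x_{k,k}(X*) > 0 and ∂U/∂x_{k,l}(X*) < 0 for all l ≠ k. If X* satisfies the stationarity condition ∇_k U(X*)·(x − x_k*) ≤ 0 for all x ∈ Ω_k and all k (where ∇_k U is the gradient of U with respect to the k-th column x_k), then for every k there exists a vector w_k ∈ ℂ^N with ‖w_k‖ ≤ 1 such that x_k* = (|h_{k1}^H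 w_k|², …, |h_{kK}^H w_k|²); i.e., every stationary point is achieved using rank-one (single-stream beamforming) correlation matrices. -/
open Matrix
open scoped ComplexOrder

namespace Matrix

variable {m n : Type*} [Fintype m] [Fintype n]

theorem star_dotProduct_self_eq_sum_normSq (v : n → ℂ) :
    star v ⬝ᵥ v = ((∑ i, Complex.normSq (v i) : ℝ) : ℂ) := by
  push_cast
  exact Finset.sum_congr rfl fun i _ => (Complex.normSq_eq_conj_mul_self).symm

theorem normSq_star_dotProduct_le (x y : n → ℂ) :
    Complex.normSq (star x ⬝ᵥ y) ≤ (∑ i, Complex.normSq (x i)) * ∑ i, Complex.normSq (y i) := by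
  have hnorm (v : n → ℂ) : ∑ i, Complex.normSq (v i) = ‖WithLp.toLp 2 v‖ ^ 2 := by
    simp [EuclideanSpace.norm_sq_eq, Complex.sq_norm]
  rw [hnorm, hnorm, ← mul_pow, ← Complex.sq_norm, dotProduct_comm,
    ← EuclideanSpace.inner_toLp_toLp]
  exact pow_le_pow_left₀ (norm_nonneg _) (norm_inner_le_norm _ _) 2

theorem star_dotProduct_conjTranspose_mulVec (A : Matrix m n ℂ) (x : n → ℂ) (y : m → ℂ) :
    star x ⬝ᵥ Aᴴ *ᵥ y = star (A *ᵥ x) ⬝ᵥ y := by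
  rw [dotProduct_mulVec, vecMul_conjTranspose, star_star]

theorem re_trace_conjTranspose_mul_self (A : Matrix m n ℂ) :
    (Aᴴ * A).trace.re = ∑ i, ∑ j, Complex.normSq (A i j) := by
  rw [← star_vec_dotProduct_vec, star_dotProduct_self_eq_sum_normSq, Complex.ofReal_re,
    Fintype.sum_prod_type, Finset.sum_comm]
  rfl

theorem sum_normSq_mulVec_le (A : Matrix m n ℂ) (x : n → ℂ) :
    ∑ i, Complex.normSq ((A *ᵥ x) i) ≤ (Aᴴ * A).trace.re * ∑ j, Complex.normSq (x j) := by
  rw [re_trace_conjTranspose_mul_self, Finset.sum_mul]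
  refine Finset.sum_le_sum fun i _ => ?_
  simpa [mulVec, dotProduct, Complex.normSq_conj] using normSq_star_dotProduct_le (star (A i)) x

theorem PosSemidef.exists_eq_conjTranspose_mul_self {Q : Matrix n n ℂ} (hQ : Q.PosSemidef) :
    ∃ S : Matrix n n ℂ, Q = Sᴴ * S := by
  classical
  open scoped MatrixOrder in
  exact ⟨CFC.sqrt Q, by
    rw [(CFC.sqrt_nonneg Q).posSemidef.1.eq, CFC.sqrt_mul_sqrt_self Q hQ.nonneg]⟩

end Matrix

theorem powerGain_conjTranspose_mul_self {m : Type*} [Fintype m] {N : ℕ}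
    (S : Matrix m (Fin N) ℂ) (g : Fin N → ℂ) :
    powerGain (Sᴴ * S) g = ∑ i, Complex.normSq ((S *ᵥ g) i) := by
  rw [powerGain, ← mulVec_mulVec, star_dotProduct_conjTranspose_mulVec,
    star_dotProduct_self_eq_sum_normSq, Complex.ofReal_re]

theorem powerGain_vecMulVec_self_star {N : ℕ} (w g : Fin N → ℂ) :
    powerGain (vecMulVec w (star w)) g = Complex.normSq (star g ⬝ᵥ w) := by
  rw [powerGain, vecMulVec_mulVec, star_dotProduct w g, op_smul_eq_smul, dotProduct_smul,
    smul_eq_mul, Complex.star_def, ← Complex.normSq_eq_conj_mul_self, Complex.ofReal_re]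

theorem mem_PGRegion_of_sum_normSq_le {N K : ℕ} (hk : Fin K → Fin N → ℂ) {w : Fin N → ℂ}
    (hw : ∑ i, Complex.normSq (w i) ≤ 1) :
    (fun l => Complex.normSq (star (hk l) ⬝ᵥ w)) ∈ PGRegion hk := by
  refine ⟨vecMulVec w (star w), posSemidef_vecMulVec_self_star w, ?_, ?_⟩
  · rwa [trace_vecMulVec, dotProduct_comm, star_dotProduct_self_eq_sum_normSq, Complex.ofReal_re]
  · simp only [powerGain_vecMulVec_self_star]

theorem exists_rankOne_powerGain_le {ι : Type*} {N : ℕ} {Q : Matrix (Fin N) (Fin N) ℂ}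
    (hQ : Q.PosSemidef) (htr : Q.trace.re ≤ 1) (g : ι → Fin N → ℂ) (k : ι) :
    ∃ w : Fin N → ℂ, ∑ i, Complex.normSq (w i) ≤ 1 ∧
      Complex.normSq (star (g k) ⬝ᵥ w) = powerGain Q (g k) ∧
      ∀ l, Complex.normSq (star (g l) ⬝ᵥ w) ≤ powerGain Q (g l) := by
  obtain ⟨S, rfl⟩ := hQ.exists_eq_conjTranspose_mul_self
  simp only [powerGain_conjTranspose_mul_self]
  set u := S *ᵥ g k
  set t := ∑ i, Complex.normSq (u i)
  have ht : 0 ≤ t := Finset.sum_nonneg fun i _ => Complex.normSq_nonneg _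
  have hc : Complex.normSq (((√t)⁻¹ : ℝ) : ℂ) = t⁻¹ := by
    rw [Complex.normSq_ofReal, ← mul_inv, Real.mul_self_sqrt ht]
  -- for `t = 0` the junk value `(√0)⁻¹ = 0` gives `w = 0`, which is still a valid witness
  set w : Fin N → ℂ := (((√t)⁻¹ : ℝ) : ℂ) • (Sᴴ *ᵥ u)
  have hgain (l : ι) :
      Complex.normSq (star (g l) ⬝ᵥ w) = Complex.normSq (star (S *ᵥ g l) ⬝ᵥ u) / t := by
    rw [dotProduct_smul, star_dotProduct_conjTranspose_mulVec, smul_eq_mul, Complex.normSq_mul,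
      hc, inv_mul_eq_div]
  refine ⟨w, ?_, ?_, fun l => ?_⟩
  · have hw : ∑ i, Complex.normSq (w i) = (∑ i, Complex.normSq ((Sᴴ *ᵥ u) i)) / t := by
      simp only [w, Pi.smul_apply, smul_eq_mul, Complex.normSq_mul, hc, inv_mul_eq_div,
        Finset.sum_div]
    rw [hw]
    refine div_le_of_le_mul₀ ht zero_le_one ?_
    calc ∑ i, Complex.normSq ((Sᴴ *ᵥ u) i) ≤ (Sᴴᴴ * Sᴴ).trace.re * t := sum_normSq_mulVec_le _ _
      _ ≤ 1 * t := by
        rw [conjTranspose_conjTranspose, trace_mul_comm]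
        exact mul_le_mul_of_nonneg_right htr ht
  · rw [hgain, star_dotProduct_self_eq_sum_normSq, Complex.normSq_ofReal, mul_self_div_self]
  · rw [hgain]
    exact div_le_of_le_mul₀ ht (Finset.sum_nonneg fun i _ => Complex.normSq_nonneg _)
      (normSq_star_dotProduct_le _ _)

theorem eq_of_map_sub_nonpos {ι : Type*} [Fintype ι] [DecidableEq ι] (φ : (ι → ℝ) →ₗ[ℝ] ℝ)
    {k : ι} (hneg : ∀ l, l ≠ k → φ (Pi.single l 1) < 0) {x y : ι → ℝ} (hk : x k = y k)
    (hle : x ≤ y) (hφ : φ (x - y) ≤ 0) : x = y := by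
  have hexpand (v : ι → ℝ) : φ v = ∑ l, v l * φ (Pi.single l 1) := by
    conv_lhs => rw [← Finset.univ_sum_single v]
    rw [map_sum]
    refine Finset.sum_congr rfl fun l _ => ?_
    rw [← smul_eq_mul, ← map_smul, ← Pi.single_smul', smul_eq_mul, mul_one]
  funext l
  by_contra hne
  have hlk : l ≠ k := fun h => hne (h ▸ hk)
  have hterm (i : ι) : 0 ≤ (x - y) i * φ (Pi.single i 1) := by
    obtain rfl | hik := eq_or_ne i k
    · simp [hk]
    · exact mul_nonneg_of_nonpos_of_nonpos (sub_nonpos.2 (hle i)) (hneg i hik).le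
  have hpos : 0 < φ (x - y) := by
    rw [hexpand]
    exact Finset.sum_pos' (fun i _ => hterm i) ⟨l, Finset.mem_univ l,
      mul_pos_of_neg_of_neg (sub_neg.2 (lt_of_le_of_ne (hle l) hne)) (hneg l hlk)⟩
  linarith

theorem stationary_point_rank_one_general
    (N K : ℕ)
    (h : Fin K → Fin K → (Fin N → ℂ))  -- `h k l` : channel from transmitter `k` to receiver `l`
    (Xstar : Fin K → Fin K → ℝ)
    (hX : ∀ k, Xstar k ∈ PGRegion (h k))
    (F : (Fin K → Fin K → ℝ) →L[ℝ] ℝ)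
    (hsign_neg : ∀ k l, l ≠ k → F (Pi.single k (Pi.single l 1)) < 0)
    (hstat : ∀ k, ∀ x ∈ PGRegion (h k), F (Pi.single k (x - Xstar k)) ≤ 0) :
    ∀ k, ∃ w : Fin N → ℂ, (∑ i, Complex.normSq (w i)) ≤ 1 ∧
      Xstar k = fun l => Complex.normSq (star (h k l) ⬝ᵥ w) := by
  intro k
  obtain ⟨Q, hQ, htr, hXk⟩ := hX k
  obtain ⟨w, hw, hwk, hwle⟩ := exists_rankOne_powerGain_le hQ htr (h k) k
  have hstat_w := hstat k _ (mem_PGRegion_of_sum_normSq_le (h k) hw)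
  rw [hXk] at hstat_w ⊢
  exact ⟨w, hw, (eq_of_map_sub_nonpos (F.toLinearMap ∘ₗ LinearMap.single ℝ (fun _ => Fin K → ℝ) k)
    (hsign_neg k) hwk hwle hstat_w).symm⟩

/-- Every stationary point `X* = [x_1*,…,x_K*]` (columns `Xstar k ∈ Ω_k`) of a
differentiable utility `U` with the sign conditions `∂U/∂x_{k,k} > 0` and
`∂U/∂x_{k,l} < 0` (`l ≠ k`) is achieved by rank-one (single-stream beamforming)
correlation matrices: for every `k` there is `w_k` with `‖w_k‖ ≤ 1` and
`x_k* = (|h_{k1}ᴴ w_k|², …, |h_{kK}ᴴ w_k|²)`. -/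
theorem stationary_point_rank_one
    (N K : ℕ)
    (h : Fin K → Fin K → (Fin N → ℂ))  -- `h k l` : channel from transmitter `k` to receiver `l`
    (U : (Fin K → Fin K → ℝ) → ℝ)
    (Xstar : Fin K → Fin K → ℝ)
    (hX : ∀ k, Xstar k ∈ PGRegion (h k))
    (F : (Fin K → Fin K → ℝ) →L[ℝ] ℝ)
    (hdiff : HasFDerivAt U F Xstar)
    (hsign_pos : ∀ k, 0 < F (Pi.single k (Pi.single k 1)))
    (hsign_neg : ∀ k l, l ≠ k → F (Pi.single k (Pi.single l 1)) < 0)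
    (hstat : ∀ k, ∀ x ∈ PGRegion (h k), F (Pi.single k (x - Xstar k)) ≤ 0) :
    ∀ k, ∃ w : Fin N → ℂ, (∑ i, Complex.normSq (w i)) ≤ 1 ∧
      Xstar k = fun l => Complex.normSq (star (h k l) ⬝ᵥ w) :=
  stationary_point_rank_one_general N K h Xstar hX F hsign_neg hstat
end

section
/- Let S ⊆ ℝ^K be a nonempty compact set and η ∈ ℝ^K. Then the exposed face of the convex hull of S in direction η equals the convex hull of the exposed face of S in direction η; that is, {x ∈ co(S) : ηᵀx = max_{y∈co(S)} ηᵀy} = co({x ∈ S : ηᵀx = max_{y∈S} ηᵀy}). -/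
/-- Auxiliary general version: the exposed face of the convex hull of a nonempty
compact set in a direction given by a linear functional equals the convex hull of
the exposed face of the set. -/
theorem exposed_face_convexHull_aux
    (K : ℕ) (S : Set (Fin K → ℝ)) (hS : S.Nonempty) (hSc : IsCompact S)
    (f : (Fin K → ℝ) →ₗ[ℝ] ℝ) :
    {x ∈ convexHull ℝ S | f x = sSup (f '' convexHull ℝ S)} =
      convexHull ℝ {x ∈ S | f x = sSup (f '' S)} := by
  have hfc : Continuous f := f.continuous_of_finiteDimensional
  set M : ℝ := sSup (f '' S) with hM
  have hbdd : BddAbove (f '' S) := (hSc.image hfc).bddAbove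
  have hle : ∀ y ∈ S, f y ≤ M := fun y hy => le_csSup hbdd ⟨y, hy, rfl⟩
  have hhull_sub : convexHull ℝ (f '' S) ⊆ Set.Iic M :=
    convexHull_min (fun y ⟨x, hx, hxy⟩ => hxy ▸ hle x hx) (convex_Iic M)
  have himg : f '' convexHull ℝ S = convexHull ℝ (f '' S) := f.image_convexHull S
  have hsup : sSup (f '' convexHull ℝ S) = M := by
    rw [himg]
    refine le_antisymm (csSup_le ((hS.image f).mono (subset_convexHull ℝ _))
      fun y hy => hhull_sub hy) ?_
    exact csSup_le_csSup ⟨M, fun y hy => hhull_sub hy⟩ (hS.image f) (subset_convexHull ℝ _)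
  rw [hsup]
  apply Set.Subset.antisymm
  · -- hard direction
    rintro x ⟨hxh, hxM⟩
    rw [convexHull_eq] at hxh
    obtain ⟨ι, t, w, z, hw0, hw1, hz, rfl⟩ := hxh
    have hfx : f (t.centerMass w z) = ∑ i ∈ t, w i * f (z i) := by
      rw [Finset.centerMass_eq_of_sum_1 _ _ hw1, map_sum]
      simp [smul_eq_mul]
    have hzero : ∑ i ∈ t, w i * (M - f (z i)) = 0 := by
      have : ∑ i ∈ t, w i * (M - f (z i)) = (∑ i ∈ t, w i) * M - ∑ i ∈ t, w i * f (z i) := by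
        rw [Finset.sum_mul, ← Finset.sum_sub_distrib]
        exact Finset.sum_congr rfl fun i _ => by ring
      rw [this, hw1, one_mul, ← hfx, hxM]
      ring
    have hkey : ∀ i ∈ t, w i ≠ 0 → f (z i) = M := by
      intro i hi hwi
      have h0 : ∀ j ∈ t, 0 ≤ w j * (M - f (z j)) := fun j hj =>
        mul_nonneg (hw0 j hj) (sub_nonneg.2 (hle _ (hz j hj)))
      have := (Finset.sum_eq_zero_iff_of_nonneg h0).1 hzero i hi
      have hsub : M - f (z i) = 0 := by
        rcases mul_eq_zero.1 this with h | h
        · exact absurd h hwi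
        · exact h
      linarith
    rw [← Finset.centerMass_filter_ne_zero (w := w)]
    apply Finset.centerMass_mem_convexHull
    · intro i hi
      exact hw0 i (Finset.mem_filter.1 hi).1
    · rw [Finset.sum_filter_ne_zero, hw1]; norm_num
    · intro i hi
      obtain ⟨hit, hwi⟩ := Finset.mem_filter.1 hi
      exact ⟨hz i hit, hkey i hit hwi⟩
  · -- easy direction
    apply convexHull_min
    · rintro x ⟨hxS, hxM⟩
      exact ⟨subset_convexHull ℝ S hxS, hxM⟩
    · exact (convex_convexHull ℝ S).inter (convex_hyperplane f.isLinear M)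

/-- For a nonempty compact set `S ⊆ ℝ^K` and a direction `η`, the exposed face of
the convex hull of `S` equals the convex hull of the exposed face of `S`. -/
theorem exposed_face_convexHull
    (K : ℕ) (S : Set (Fin K → ℝ)) (hS : S.Nonempty) (hSc : IsCompact S)
    (η : Fin K → ℝ) :
    {x ∈ convexHull ℝ S | ∑ l, η l * x l =
        sSup ((fun y : Fin K → ℝ => ∑ l, η l * y l) '' (convexHull ℝ S))} =
      convexHull ℝ {x ∈ S | ∑ l, η l * x l =
        sSup ((fun y : Fin K → ℝ => ∑ l, η l * y l) '' S)} := by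
  exact exposed_face_convexHull_aux K S hS hSc
    { toFun := fun x => ∑ l, η l * x l
      map_add' := fun x y => by
        simp [mul_add, Finset.sum_add_distrib]
      map_smul' := fun c x => by
        simp [Finset.mul_sum, mul_left_comm] }
end

section
/- Let h_1,…,h_K ∈ ℂ^N, set H_l = h_l h_l^H, and let Ω(H) = {(tr(Q H_1), …, tr(Q H_K)) : Q Hermitian positive semidefinite, tr(Q) ≤ 1} and W(H) = {(tr(Q H_1), …, tr(Q H_K)) : Q Hermitian positive semidefinite, tr(Q) = 1}. If η ∈ ℝ^K is such that the support value s_{Ω(H)}(η) = max_{y∈Ω(H)} ηᵀy is strictly positive, then the exposed faces coincide: Φ_{Ω(H)}(η) = Φ_{W(H)}(η), i.e., {y ∈ Ω(H) : ηᵀy = s_{Ω(H)}(η)} = {y ∈ W(H) : ηᵀy = max_{z∈W(H)} ηᵀz}. -/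
/-!
A positive semidefinite matrix of trace zero vanishes, and one of trace `τ ∈ (0, 1]` is
`τ • (τ⁻¹ • Q)` with `tr (τ⁻¹ • Q) = 1`; so every point of `Ω(H)` is `0` or `t • w` with
`t ∈ [0, 1]` and `w ∈ W(H)`. For a linear functional `f` with positive supremum `s` on `Ω(H)`
this gives the same supremum on `W(H) ⊆ Ω(H)`, and a maximiser `t • w` in `Ω(H)` has
`s = t f(w) ≤ t s`, hence `t = 1`.
-/

open Matrix
open scoped ComplexOrder

/-- The joint field of values
`W(H) = {(tr(Q H_1),…,tr(Q H_K)) : Q PSD, tr Q = 1}`. -/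
def JFV {N K : ℕ} (H : Fin K → Matrix (Fin N) (Fin N) ℂ) : Set (Fin K → ℝ) :=
  {y | ∃ Q : Matrix (Fin N) (Fin N) ℂ, Q.PosSemidef ∧ Q.trace = 1 ∧
    y = fun l => ((Q * H l).trace).re}

/-- `Ω(H) = {(tr(Q H_1),…,tr(Q H_K)) : Q PSD, tr Q ≤ 1}`. -/
def OmegaH {N K : ℕ} (H : Fin K → Matrix (Fin N) (Fin N) ℂ) : Set (Fin K → ℝ) :=
  {y | ∃ Q : Matrix (Fin N) (Fin N) ℂ, Q.PosSemidef ∧ Q.trace.re ≤ 1 ∧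
    y = fun l => ((Q * H l).trace).re}

open Set
open scoped Pointwise

-- `sSup` of a set of reals that is empty or unbounded above is `0`.
lemma Real.bddAbove_of_sSup_pos {s : Set ℝ} (h : 0 < sSup s) : BddAbove s := by
  by_contra hs
  exact h.ne' (Real.sSup_of_not_bddAbove hs)

section SupFace

variable {E : Type*} [AddCommGroup E] [Module ℝ E]

def supFace (f : E → ℝ) (S : Set E) : Set E := {y ∈ S | f y = sSup (f '' S)}

variable {f : E → ℝ} {W Ω : Set E}

lemma map_smul_le_mul_sSup_image (hf : ∀ t : ℝ, 0 ≤ t → ∀ w, f (t • w) = t * f w)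
    (hW : BddAbove (f '' W)) {t : ℝ} (ht : 0 ≤ t) {w : E} (hw : w ∈ W) :
    f (t • w) ≤ t * sSup (f '' W) := by
  rw [hf t ht]
  exact mul_le_mul_of_nonneg_left (le_csSup hW (mem_image_of_mem f hw)) ht

lemma sSup_image_eq_of_subset_insert_zero_Icc_smul
    (hf : ∀ t : ℝ, 0 ≤ t → ∀ w, f (t • w) = t * f w)
    (hWΩ : W ⊆ Ω) (hΩ : Ω ⊆ insert 0 (Icc (0 : ℝ) 1 • W)) (hpos : 0 < sSup (f '' Ω)) :
    sSup (f '' W) = sSup (f '' Ω) := by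
  have hf0 : f 0 = 0 := by simpa using hf 0 le_rfl 0
  have hΩbdd := Real.bddAbove_of_sSup_pos hpos
  have hWbdd : BddAbove (f '' W) := hΩbdd.mono (image_mono hWΩ)
  have hΩne : (f '' Ω).Nonempty := by
    refine nonempty_iff_ne_empty.mpr fun hs => ?_
    rw [hs, Real.sSup_empty] at hpos
    exact hpos.false
  obtain ⟨_, ⟨y, hyΩ, rfl⟩, hy⟩ := exists_lt_of_lt_csSup hΩne hpos
  obtain hy0 | ⟨t, ⟨ht0, -⟩, w, hw, rfl⟩ := hΩ hyΩ
  · rw [hy0, hf0] at hy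
    exact (lt_irrefl 0 hy).elim
  have hWpos : 0 < sSup (f '' W) :=
    pos_of_mul_pos_right (hy.trans_le (map_smul_le_mul_sSup_image hf hWbdd ht0 hw)) ht0
  refine le_antisymm (csSup_le_csSup hΩbdd ⟨_, mem_image_of_mem f hw⟩ (image_mono hWΩ))
    (csSup_le hΩne (forall_mem_image.2 fun y hy => ?_))
  obtain rfl | ⟨t, ⟨ht0, ht1⟩, w, hw, rfl⟩ := hΩ hy
  · exact hf0.trans_le hWpos.le
  · exact (map_smul_le_mul_sSup_image hf hWbdd ht0 hw).trans (mul_le_of_le_one_left hWpos.le ht1)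

lemma supFace_eq_of_subset_insert_zero_Icc_smul
    (hf : ∀ t : ℝ, 0 ≤ t → ∀ w, f (t • w) = t * f w)
    (hWΩ : W ⊆ Ω) (hΩ : Ω ⊆ insert 0 (Icc (0 : ℝ) 1 • W)) (hpos : 0 < sSup (f '' Ω)) :
    supFace f Ω = supFace f W := by
  have hsup := sSup_image_eq_of_subset_insert_zero_Icc_smul hf hWΩ hΩ hpos
  have hWbdd : BddAbove (f '' W) := (Real.bddAbove_of_sSup_pos hpos).mono (image_mono hWΩ)
  ext y
  refine ⟨fun ⟨hyΩ, hy⟩ => ?_, fun ⟨hyW, hy⟩ => ⟨hWΩ hyW, hy.trans hsup⟩⟩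
  obtain rfl | ⟨t, ⟨ht0, ht1⟩, w, hw, rfl⟩ := hΩ hyΩ
  · rw [show f 0 = 0 by simpa using hf 0 le_rfl 0] at hy
    exact absurd hy hpos.ne
  have ht : t = 1 := by
    have := map_smul_le_mul_sSup_image hf hWbdd ht0 hw
    rw [hy, hsup] at this
    exact le_antisymm ht1 (le_of_mul_le_mul_right (by simpa using this) hpos)
  subst ht
  simp only [one_smul] at hy ⊢
  exact ⟨hw, hy.trans hsup.symm⟩

end SupFace

lemma JFV_subset_OmegaH {N K : ℕ} (H : Fin K → Matrix (Fin N) (Fin N) ℂ) :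
    JFV H ⊆ OmegaH H := by
  rintro _ ⟨Q, hQ, htr, rfl⟩
  exact ⟨Q, hQ, by simp [htr], rfl⟩

lemma OmegaH_subset_insert_zero_Icc_smul_JFV {N K : ℕ} (H : Fin K → Matrix (Fin N) (Fin N) ℂ) :
    OmegaH H ⊆ insert 0 (Icc (0 : ℝ) 1 • JFV H) := by
  rintro _ ⟨Q, hQ, htr, rfl⟩
  obtain ⟨htr_nonneg, htr_im⟩ := Complex.nonneg_iff.mp hQ.trace_nonneg
  have htr_real : Q.trace = Q.trace.re := Complex.ext rfl (by simp [htr_im])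
  obtain htr0 | htr_pos := htr_nonneg.eq_or_lt
  · have hQ0 : Q = 0 := hQ.trace_eq_zero_iff.mp (by rw [htr_real, ← htr0, Complex.ofReal_zero])
    left
    ext l
    simp [hQ0]
  · right
    refine ⟨Q.trace.re, ⟨htr_nonneg, htr⟩, _,
      ⟨(Q.trace.re)⁻¹ • Q, hQ.smul (inv_nonneg.mpr htr_nonneg), ?_, rfl⟩, ?_⟩
    · rw [trace_smul, Complex.real_smul, Complex.ofReal_inv, ← htr_real]
      exact inv_mul_cancel₀ (by rw [htr_real]; exact_mod_cast htr_pos.ne')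
    · ext l
      simp [trace_smul, htr_pos.ne']

/-- For `H_l = h_l h_lᴴ` and a direction `η` whose support value on `Ω(H)` is
strictly positive, the exposed faces of `Ω(H)` and of `W(H)` in direction `η`
coincide. -/
theorem omega_exposed_face_eq_jfv_exposed_face
    (N K : ℕ)
    (h : Fin K → (Fin N → ℂ))
    (η : Fin K → ℝ)
    (hpos : 0 < sSup ((fun y : Fin K → ℝ => ∑ l, η l * y l) ''
        OmegaH (fun l => Matrix.vecMulVec (h l) (star (h l))))) :
    {y ∈ OmegaH (fun l => Matrix.vecMulVec (h l) (star (h l))) |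
        ∑ l, η l * y l = sSup ((fun y : Fin K → ℝ => ∑ l, η l * y l) ''
          OmegaH (fun l => Matrix.vecMulVec (h l) (star (h l))))} =
      {y ∈ JFV (fun l => Matrix.vecMulVec (h l) (star (h l))) |
        ∑ l, η l * y l = sSup ((fun y : Fin K → ℝ => ∑ l, η l * y l) ''
          JFV (fun l => Matrix.vecMulVec (h l) (star (h l))))} := by
  have hη : ∀ t : ℝ, 0 ≤ t → ∀ y : Fin K → ℝ, ∑ l, η l * (t • y) l = t * ∑ l, η l * y l :=
    fun t _ y => by simp only [Pi.smul_apply, smul_eq_mul, Finset.mul_sum, mul_left_comm]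
  exact supFace_eq_of_subset_insert_zero_Icc_smul hη (JFV_subset_OmegaH _)
    (OmegaH_subset_insert_zero_Icc_smul_JFV _) hpos
end
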